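/- arXiv:2003.10123 — 5 statements merged into one kernel-verified Lean document; each statement's English description precedes it below -/
import Mathlib

section
/- For every k ∈ ℕ with k ≥ 1, every j ∈ {0,1,2}, and every (x,y) in the closed rectangle [0,π] × [-1,0], the function f_k(x,y) = (2 / ((2k-1)·π·sinh((2k-1)·π²/2))) · cosh((2k-1)·(π/2)·(x-π)) · cos((2k-1)·(π/2)·(y+1)) satisfies | ∂^j/∂x^j ∂^{2-j}/∂y^{2-j} f_k(x,y) | ≤ (√2/2)·π·(2k-1). -/
/-!
Write `f_k = C cosh(a(x - π)) cos(a(y + 1))` with `a = (2k-1)π/2` and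
`C = 2 / ((2k-1)π sinh(aπ))`. Each second derivative is `± C a²` times `cosh` or `sinh` of
`a(x - π)` times `cos` or `sin` of `a(y + 1)`, so on the rectangle it is bounded by
`C a² cosh(aπ) = (2k-1)(π/2) coth(aπ)`. As `aπ ≥ π²/2 > 1`, `sinh(aπ) ≥ 1`,
and then `cosh² = 1 + sinh² ≤ 2 sinh²` gives `coth(aπ) ≤ √2`.
-/

open Real

/-- The function `f_k = Nψ_k`, image of the basis function
`ψ_k(y) = √2 cos((2k-1)(π/2)(y+1))` under the partial Neumann map. -/
noncomputable def fNeu (k : ℕ) (x y : ℝ) : ℝ :=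
  (2 / ((2 * (k : ℝ) - 1) * π * Real.sinh ((2 * (k : ℝ) - 1) * π ^ 2 / 2))) *
    Real.cosh ((2 * (k : ℝ) - 1) * (π / 2) * (x - π)) *
    Real.cos ((2 * (k : ℝ) - 1) * (π / 2) * (y + 1))

namespace Real

theorem abs_sinh_le_cosh (x : ℝ) : |sinh x| ≤ cosh x := by
  rw [abs_sinh, ← cosh_abs x]
  exact (sinh_lt_cosh _).le

theorem cosh_le_sqrt_two_mul_sinh {x : ℝ} (hx : 1 ≤ sinh x) : cosh x ≤ √2 * sinh x := by
  have hsq : cosh x ^ 2 ≤ (√2 * sinh x) ^ 2 := by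
    rw [mul_pow, sq_sqrt zero_le_two, cosh_sq]
    nlinarith
  exact (pow_le_pow_iff_left₀ (cosh_pos x).le (by positivity) two_ne_zero).1 hsq

end Real

section Separable

variable (C a c d : ℝ)

theorem hasDerivAt_cosh_mul_sub (x : ℝ) :
    HasDerivAt (fun t => cosh (a * (t - c))) (a * sinh (a * (x - c))) x := by
  simpa [mul_comm] using (((hasDerivAt_id x).sub_const c).const_mul a).cosh

theorem hasDerivAt_sinh_mul_sub (x : ℝ) :
    HasDerivAt (fun t => sinh (a * (t - c))) (a * cosh (a * (x - c))) x := by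
  simpa [mul_comm] using (((hasDerivAt_id x).sub_const c).const_mul a).sinh

theorem hasDerivAt_cos_mul_add (y : ℝ) :
    HasDerivAt (fun s => cos (a * (s + d))) (-(a * sin (a * (y + d)))) y := by
  simpa [mul_comm] using (((hasDerivAt_id y).add_const d).const_mul a).cos

theorem hasDerivAt_sin_mul_add (y : ℝ) :
    HasDerivAt (fun s => sin (a * (s + d))) (a * cos (a * (y + d))) y := by
  simpa [mul_comm] using (((hasDerivAt_id y).add_const d).const_mul a).sin

theorem deriv_deriv_cosh_mul_cos_fst (x y : ℝ) :
    deriv (deriv fun t => C * cosh (a * (t - c)) * cos (a * (y + d))) x =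
      C * a ^ 2 * cosh (a * (x - c)) * cos (a * (y + d)) := by
  have hx : deriv (fun t => C * cosh (a * (t - c)) * cos (a * (y + d))) =
      fun t => C * (a * sinh (a * (t - c))) * cos (a * (y + d)) :=
    funext fun t => (((hasDerivAt_cosh_mul_sub a c t).const_mul C).mul_const _).deriv
  rw [hx, ((((hasDerivAt_sinh_mul_sub a c x).const_mul a).const_mul C).mul_const _).deriv]
  ring

theorem deriv_deriv_cosh_mul_cos_mixed (x y : ℝ) :
    deriv (fun t => deriv (fun s => C * cosh (a * (t - c)) * cos (a * (s + d))) y) x =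
      -(C * a ^ 2 * sinh (a * (x - c)) * sin (a * (y + d))) := by
  have hy : (fun t => deriv (fun s => C * cosh (a * (t - c)) * cos (a * (s + d))) y) =
      fun t => C * cosh (a * (t - c)) * -(a * sin (a * (y + d))) :=
    funext fun t => ((hasDerivAt_cos_mul_add a d y).const_mul _).deriv
  rw [hy, (((hasDerivAt_cosh_mul_sub a c x).const_mul C).mul_const _).deriv]
  ring

theorem deriv_deriv_cosh_mul_cos_snd (x y : ℝ) :
    deriv (deriv fun s => C * cosh (a * (x - c)) * cos (a * (s + d))) y =
      -(C * a ^ 2 * cosh (a * (x - c)) * cos (a * (y + d))) := by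
  have hy : deriv (fun s => C * cosh (a * (x - c)) * cos (a * (s + d))) =
      fun s => C * cosh (a * (x - c)) * (-a * sin (a * (s + d))) := funext fun s => by
    rw [((hasDerivAt_cos_mul_add a d s).const_mul _).deriv, neg_mul]
  rw [hy, (((hasDerivAt_sin_mul_add a d y).const_mul (-a)).const_mul _).deriv]
  ring

theorem abs_mul_mul_le {u v M : ℝ} (hC : 0 ≤ C) (hu : |u| ≤ M) (hv : |v| ≤ 1) :
    |C * u * v| ≤ C * M := by
  rw [abs_mul, abs_mul, abs_of_nonneg hC, mul_assoc]
  gcongr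
  simpa using mul_le_mul hu hv (abs_nonneg v) ((abs_nonneg u).trans hu)

theorem abs_second_derivs_cosh_mul_cos_le {L x : ℝ} (y : ℝ) (hC : 0 ≤ C)
    (hx : |a * (x - c)| ≤ L) :
    |deriv (deriv fun t => C * cosh (a * (t - c)) * cos (a * (y + d))) x| ≤ C * a ^ 2 * cosh L ∧
    |deriv (fun t => deriv (fun s => C * cosh (a * (t - c)) * cos (a * (s + d))) y) x| ≤
      C * a ^ 2 * cosh L ∧
    |deriv (deriv fun s => C * cosh (a * (x - c)) * cos (a * (s + d))) y| ≤
      C * a ^ 2 * cosh L := by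
  have hCa : 0 ≤ C * a ^ 2 := by positivity
  have hcosh : |cosh (a * (x - c))| ≤ cosh L := by
    rw [abs_of_pos (cosh_pos _), cosh_le_cosh]
    exact hx.trans (le_abs_self L)
  have hsinh : |sinh (a * (x - c))| ≤ cosh L :=
    (abs_sinh_le_cosh _).trans ((le_abs_self _).trans hcosh)
  rw [deriv_deriv_cosh_mul_cos_fst, deriv_deriv_cosh_mul_cos_mixed,
    deriv_deriv_cosh_mul_cos_snd, abs_neg, abs_neg]
  exact ⟨abs_mul_mul_le _ hCa hcosh (abs_cos_le_one _),
    abs_mul_mul_le _ hCa hsinh (abs_sin_le_one _), abs_mul_mul_le _ hCa hcosh (abs_cos_le_one _)⟩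

end Separable

theorem fNeu_coeff_mul_sq_mul_cosh_le {m : ℝ} (hm : 1 ≤ m) :
    2 / (m * π * sinh (m * π ^ 2 / 2)) * (m * (π / 2)) ^ 2 * cosh (m * (π / 2) * π) ≤
      √2 / 2 * π * m := by
  have hL : 1 ≤ m * π ^ 2 / 2 := by nlinarith [pi_gt_three]
  set L := m * π ^ 2 / 2
  have hS : 1 ≤ sinh L := hL.trans (self_le_sinh_iff.2 (by linarith))
  have hS0 : 0 < sinh L := by linarith
  calc 2 / (m * π * sinh L) * (m * (π / 2)) ^ 2 * cosh (m * (π / 2) * π)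
      = m * π / (2 * sinh L) * cosh L := by
        rw [show m * (π / 2) * π = L by ring]; field_simp
    _ ≤ m * π / (2 * sinh L) * (√2 * sinh L) := by
        gcongr; exact cosh_le_sqrt_two_mul_sinh hS
    _ = √2 / 2 * π * m := by field_simp

theorem fNeu_second_derivatives_bound_general (k : ℕ) (hk : 1 ≤ k)
    (x : ℝ) (hx : x ∈ Set.Icc (0:ℝ) π) (y : ℝ) :
    |deriv (deriv (fun t => fNeu k t y)) x| ≤ (Real.sqrt 2 / 2) * π * (2 * (k : ℝ) - 1)
    ∧ |deriv (fun t => deriv (fNeu k t) y) x| ≤ (Real.sqrt 2 / 2) * π * (2 * (k : ℝ) - 1)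
    ∧ |deriv (deriv (fNeu k x)) y| ≤ (Real.sqrt 2 / 2) * π * (2 * (k : ℝ) - 1) := by
  have hm : (1 : ℝ) ≤ 2 * k - 1 := by
    have : (1 : ℝ) ≤ k := by exact_mod_cast hk
    linarith
  have ha : 0 ≤ (2 * (k : ℝ) - 1) * (π / 2) := by positivity
  have hxπ : |(2 * (k : ℝ) - 1) * (π / 2) * (x - π)| ≤ (2 * (k : ℝ) - 1) * (π / 2) * π := by
    rw [abs_mul, abs_of_nonneg ha, abs_of_nonpos (by linarith [hx.2])]
    gcongr
    linarith [hx.1]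
  have hC : 0 ≤ 2 / ((2 * (k : ℝ) - 1) * π * sinh ((2 * (k : ℝ) - 1) * π ^ 2 / 2)) := by
    have : 0 ≤ sinh ((2 * (k : ℝ) - 1) * π ^ 2 / 2) := sinh_nonneg_iff.2 (by positivity)
    positivity
  obtain ⟨hxx, hxy, hyy⟩ := abs_second_derivs_cosh_mul_cos_le _ _ π 1 y hC hxπ
  have hcoeff := fNeu_coeff_mul_sq_mul_cosh_le hm
  exact ⟨hxx.trans hcoeff, hxy.trans hcoeff, hyy.trans hcoeff⟩

/-- Uniform bound `(√2/2) π (2k-1)` for all the second order partial derivatives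
`∂^j/∂x^j ∂^{2-j}/∂y^{2-j} f_k`, `j ∈ {0,1,2}`, on the closed rectangle `[0,π] × [-1,0]`. -/
theorem fNeu_second_derivatives_bound (k : ℕ) (hk : 1 ≤ k)
    (x : ℝ) (hx : x ∈ Set.Icc (0:ℝ) π) (y : ℝ) (hy : y ∈ Set.Icc (-1:ℝ) 0) :
    |deriv (deriv (fun t => fNeu k t y)) x| ≤ (Real.sqrt 2 / 2) * π * (2 * (k : ℝ) - 1)
    ∧ |deriv (fun t => deriv (fNeu k t) y) x| ≤ (Real.sqrt 2 / 2) * π * (2 * (k : ℝ) - 1)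
    ∧ |deriv (deriv (fNeu k x)) y| ≤ (Real.sqrt 2 / 2) * π * (2 * (k : ℝ) - 1) :=
  fNeu_second_derivatives_bound_general k hk x hx y
end

section
/- (Hilbert's inequality.) For every square-summable sequence (a_k)_{k≥1} of complex numbers, Σ_{j≥1} Σ_{k≥1} |a_j|·|a_k| / (j + k - 1) ≤ π · Σ_{k≥1} |a_k|². -/
/-!
Schur's test: if `K ≥ 0` is symmetric and `∑ₖ K j k p k ≤ C p j` for positive weights `p`, then
`∑ x_j x_k K j k ≤ C ∑ x_j²`, by the weighted AM-GM inequality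
`2 x_j x_k ≤ x_j² p_k / p_j + x_k² p_j / p_k`. For Hilbert's kernel
`1 / (j + k + 1) = 1 / ((j + 1/2) + (k + 1/2))` take `p k = (k + 1/2)^(-1/2)`: the row sum is the
midpoint sum of the convex function `x^(-1/2) (x + c)⁻¹`, `c = j + 1/2`, over the unit intervals of
`(0, ∞)`, hence at most its integral `π / √c` (an antiderivative is `(2 / √c) arctan √(x / c)`).
-/

open Real Set

lemma two_mul_mul_le_sq_mul_div_add_sq_mul_div (a b : ℝ) {u v : ℝ} (hu : 0 < u) (hv : 0 < v) :
    2 * (a * b) ≤ a ^ 2 * v / u + b ^ 2 * u / v := by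
  rw [div_add_div _ _ hu.ne' hv.ne', le_div_iff₀ (by positivity)]
  nlinarith [sq_nonneg (a * v - b * u)]

lemma summable_prod_and_tsum_le_of_tsum_row_le {ι κ : Type*} {f : ι × κ → ℝ} {g : ι → ℝ}
    (hf : 0 ≤ f) (hrow : ∀ i, Summable fun j => f (i, j)) (hrow_le : ∀ i, ∑' j, f (i, j) ≤ g i)
    (hg : Summable g) : Summable f ∧ ∑' q, f q ≤ ∑' i, g i := by
  have hcol : Summable fun i => ∑' j, f (i, j) :=
    .of_nonneg_of_le (fun i => tsum_nonneg fun j => hf (i, j)) hrow_le hg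
  refine ⟨(summable_prod_of_nonneg hf).2 ⟨hrow, hcol⟩, ?_⟩
  rw [Summable.tsum_prod' ((summable_prod_of_nonneg hf).2 ⟨hrow, hcol⟩) hrow]
  exact hcol.tsum_le_tsum hrow_le hg

theorem schur_test {ι : Type*} {K : ι → ι → ℝ} {p x : ι → ℝ} {C : ℝ}
    (hK : ∀ i j, 0 ≤ K i j) (hK_symm : ∀ i j, K i j = K j i) (hp : ∀ i, 0 < p i)
    (hx : ∀ i, 0 ≤ x i) (hrow : ∀ i, Summable fun j => K i j * p j)
    (hrow_le : ∀ i, ∑' j, K i j * p j ≤ C * p i) (hx2 : Summable fun i => x i ^ 2) :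
    (Summable fun q : ι × ι => x q.1 * x q.2 * K q.1 q.2) ∧
      ∑' q : ι × ι, x q.1 * x q.2 * K q.1 q.2 ≤ C * ∑' i, x i ^ 2 := by
  obtain ⟨hM, hM_le⟩ := summable_prod_and_tsum_le_of_tsum_row_le
    (f := fun q : ι × ι => x q.1 ^ 2 / p q.1 * (K q.1 q.2 * p q.2)) (g := fun i => C * x i ^ 2)
    (fun q => by have := hp q.1; have := hp q.2; have := hK q.1 q.2; positivity)
    (fun i => (hrow i).mul_left (x i ^ 2 / p i))
    (fun i => by
      dsimp only
      rw [tsum_mul_left]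
      calc x i ^ 2 / p i * ∑' j, K i j * p j ≤ x i ^ 2 / p i * (C * p i) := by
            have := hp i; gcongr; exact hrow_le i
        _ = C * x i ^ 2 := by field_simp [(hp i).ne'])
    (hx2.mul_left C)
  set M : ι × ι → ℝ := fun q => x q.1 ^ 2 / p q.1 * (K q.1 q.2 * p q.2) with hM_def
  have hM_swap : Summable fun q : ι × ι => M q.swap := hM.prod_symm
  have hMM : Summable fun q => (M q + M q.swap) / 2 := (hM.add hM_swap).div_const 2
  have hle : ∀ q : ι × ι, x q.1 * x q.2 * K q.1 q.2 ≤ (M q + M q.swap) / 2 := by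
    rintro ⟨i, j⟩
    have := mul_le_mul_of_nonneg_left
      (two_mul_mul_le_sq_mul_div_add_sq_mul_div (x i) (x j) (hp i) (hp j)) (hK i j)
    simp only [hM_def, Prod.swap, hK_symm j i]
    linear_combination this / 2
  have hT_nonneg : ∀ q : ι × ι, 0 ≤ x q.1 * x q.2 * K q.1 q.2 := fun q => by
    have := hx q.1; have := hx q.2; have := hK q.1 q.2; positivity
  have hT : Summable fun q : ι × ι => x q.1 * x q.2 * K q.1 q.2 :=
    .of_nonneg_of_le hT_nonneg hle hMM
  refine ⟨hT, ?_⟩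
  calc ∑' q : ι × ι, x q.1 * x q.2 * K q.1 q.2 ≤ ∑' q, (M q + M q.swap) / 2 :=
        hT.tsum_le_tsum hle hMM
    _ = ∑' q, M q := by
        have hswap : ∑' q : ι × ι, M q.swap = ∑' q, M q := (Equiv.prodComm ι ι).tsum_eq M
        rw [tsum_div_const, hM.tsum_add hM_swap, hswap]; ring
    _ ≤ ∑' i, C * x i ^ 2 := hM_le
    _ = C * ∑' i, x i ^ 2 := tsum_mul_left

/-- The left Hermite–Hadamard inequality, with `∫ₐᵇ f` written as `G b - G a`. -/
theorem ConvexOn.sub_mul_le_sub_of_hasDerivAt {f G : ℝ → ℝ} {a b : ℝ} (hab : a ≤ b)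
    (hf : ConvexOn ℝ (Ioo a b) f) (hG : ContinuousOn G (Icc a b))
    (hG' : ∀ x ∈ Ioo a b, HasDerivAt G (f x) x) :
    (b - a) * f ((a + b) / 2) ≤ G b - G a := by
  obtain ⟨m, r, rfl, rfl⟩ : ∃ m r, a = m - r ∧ b = m + r :=
    ⟨(a + b) / 2, (b - a) / 2, by ring, by ring⟩
  have hr : 0 ≤ r := by linarith
  have hψ : MonotoneOn (fun t => G (m + t) - G (m - t) - t * (2 * f m)) (Icc 0 r) := by
    refine monotoneOn_of_hasDerivWithinAt_nonneg (f' := fun t => f (m + t) + f (m - t) - 2 * f m)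
      (convex_Icc 0 r) ?_ (fun t ht => ?_) (fun t ht => ?_)
    · refine .sub (.sub (hG.comp (by fun_prop) fun t ht => ?_)
        (hG.comp (by fun_prop) fun t ht => ?_)) (by fun_prop)
      all_goals constructor <;> linarith [ht.1, ht.2]
    all_goals
      rw [interior_Icc] at ht
      have h₁ : m + t ∈ Ioo (m - r) (m + r) := ⟨by linarith [ht.1], by linarith [ht.2]⟩
      have h₂ : m - t ∈ Ioo (m - r) (m + r) := ⟨by linarith [ht.2], by linarith [ht.1]⟩
    · have hd : HasDerivAt (fun t => G (m + t) - G (m - t) - t * (2 * f m))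
          (f (m + t) - -f (m - t) - 2 * f m) t :=
        (((hG' _ h₁).comp_const_add m t).sub ((hG' _ h₂).comp_const_sub m t)).sub
          (hasDerivAt_mul_const (2 * f m))
      rw [sub_neg_eq_add] at hd
      exact hd.hasDerivWithinAt
    · have := hf.2 h₂ h₁ (by norm_num : (0 : ℝ) ≤ 1 / 2) (by norm_num : (0 : ℝ) ≤ 1 / 2)
        (by norm_num)
      simp only [smul_eq_mul, show 1 / 2 * (m - t) + 1 / 2 * (m + t) = m by ring] at this
      linarith
  have := hψ (left_mem_Icc.2 hr) (right_mem_Icc.2 hr) hr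
  simp only [add_zero, sub_zero, zero_mul, sub_self] at this
  rw [show (m - r + (m + r)) / 2 = m by ring]
  linarith

lemma convexOn_inv_sqrt_mul_inv_add {c : ℝ} (hc : 0 ≤ c) :
    ConvexOn ℝ (Ioi 0) fun x : ℝ => (√x)⁻¹ * (x + c)⁻¹ := by
  have hinv : ConvexOn ℝ (Ioi 0) fun y : ℝ => y⁻¹ := by simpa using convexOn_zpow (𝕜 := ℝ) (-1)
  have hsqrt_image : (√·) '' Ioi (0 : ℝ) = Ioi 0 := by
    ext y
    exact ⟨fun ⟨x, hx, hxy⟩ => hxy ▸ sqrt_pos.2 hx,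
      fun hy => ⟨y ^ 2, mem_Ioi.2 (pow_pos hy 2), sqrt_sq hy.le⟩⟩
  have h₁ : ConvexOn ℝ (Ioi 0) fun x : ℝ => (√x)⁻¹ :=
    ConvexOn.comp_concaveOn (by rwa [hsqrt_image])
      (strictConcaveOn_sqrt.concaveOn.subset Ioi_subset_Ici_self (convex_Ioi 0))
      (by rw [hsqrt_image]; exact antitoneOn_inv_pos)
  have h₂ : ConvexOn ℝ (Ioi 0) fun x : ℝ => (x + c)⁻¹ := by
    refine (hinv.translate_left c).subset (fun x hx => ?_) (convex_Ioi 0)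
    simp only [mem_preimage, mem_Ioi] at hx ⊢
    linarith
  refine h₁.mul h₂ (fun x _ => by positivity) (fun x hx => by have := mem_Ioi.1 hx; positivity) ?_
  refine AntitoneOn.monovaryOn (fun x hx y _ hxy => ?_) (fun x hx y _ hxy => ?_)
  · exact inv_anti₀ (sqrt_pos.2 hx) (sqrt_le_sqrt hxy)
  · have := mem_Ioi.1 hx
    exact inv_anti₀ (by positivity) (by linarith)

lemma hasDerivAt_arctan_sqrt_div_sqrt {c x : ℝ} (hc : 0 < c) (hx : 0 < x) :
    HasDerivAt (fun x => 2 / √c * arctan (√x / √c)) ((√x)⁻¹ * (x + c)⁻¹) x := by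
  have hd := (((hasDerivAt_sqrt hx.ne').div_const √c).arctan).const_mul (2 / √c)
  refine hd.congr_deriv ?_
  have := sqrt_pos.2 hx
  have := sqrt_pos.2 hc
  rw [div_pow, sq_sqrt hx.le, sq_sqrt hc.le]
  field_simp
  rw [sq_sqrt hc.le]
  ring

lemma sum_range_inv_sqrt_mul_inv_add_le {c : ℝ} (hc : 0 < c) (n : ℕ) :
    ∑ k ∈ Finset.range n, (√((k : ℝ) + 1 / 2))⁻¹ * ((k : ℝ) + 1 / 2 + c)⁻¹ ≤ π / √c := by
  set G : ℝ → ℝ := fun x => 2 / √c * arctan (√x / √c)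
  have hstep : ∀ k : ℕ, (√((k : ℝ) + 1 / 2))⁻¹ * ((k : ℝ) + 1 / 2 + c)⁻¹ ≤ G (k + 1) - G k := by
    intro k
    have := ((convexOn_inv_sqrt_mul_inv_add hc.le).subset (fun x hx => ?_)
      (convex_Ioo _ _)).sub_mul_le_sub_of_hasDerivAt (G := G) (a := k) (b := k + 1)
      (by linarith) (by fun_prop) (fun x hx => hasDerivAt_arctan_sqrt_div_sqrt hc ?_)
    · rwa [show ((k : ℝ) + (k + 1)) / 2 = k + 1 / 2 by ring, add_sub_cancel_left, one_mul] at this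
    all_goals exact (Nat.cast_nonneg k).trans_lt hx.1
  have hG_le : G n ≤ π / √c := by
    calc G n ≤ 2 / √c * (π / 2) := by simp only [G]; gcongr; exact (arctan_lt_pi_div_two _).le
      _ = π / √c := by ring
  calc ∑ k ∈ Finset.range n, (√((k : ℝ) + 1 / 2))⁻¹ * ((k : ℝ) + 1 / 2 + c)⁻¹
      ≤ ∑ k ∈ Finset.range n, (G (k + 1) - G k) := Finset.sum_le_sum fun k _ => hstep k
    _ = G n - G 0 := by exact_mod_cast Finset.sum_range_sub (fun k : ℕ => G k) n
    _ ≤ π / √c := by simpa [G] using hG_le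

lemma summable_inv_sqrt_mul_inv_add {c : ℝ} (hc : 0 < c) :
    Summable fun k : ℕ => (√((k : ℝ) + 1 / 2))⁻¹ * ((k : ℝ) + 1 / 2 + c)⁻¹ :=
  summable_of_sum_range_le (fun _ => by positivity) (sum_range_inv_sqrt_mul_inv_add_le hc)

lemma tsum_inv_sqrt_mul_inv_add_le {c : ℝ} (hc : 0 < c) :
    ∑' k : ℕ, (√((k : ℝ) + 1 / 2))⁻¹ * ((k : ℝ) + 1 / 2 + c)⁻¹ ≤ π / √c :=
  tsum_le_of_sum_range_le (fun _ => by positivity) (sum_range_inv_sqrt_mul_inv_add_le hc)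

/-- The sequence is encoded as `a : ℕ → ℂ` with `a k` standing for `a_{k+1}`, so the
denominator `j + k - 1` becomes `j + k + 1`. -/
theorem hilbert_inequality (a : ℕ → ℂ) (h : Summable fun k : ℕ => ‖a k‖ ^ 2) :
    (Summable fun p : ℕ × ℕ => ‖a p.1‖ * ‖a p.2‖ / ((p.1 : ℝ) + (p.2 : ℝ) + 1))
    ∧ ∑' p : ℕ × ℕ, ‖a p.1‖ * ‖a p.2‖ / ((p.1 : ℝ) + (p.2 : ℝ) + 1)
        ≤ π * ∑' k : ℕ, ‖a k‖ ^ 2 := by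
  have hc : ∀ j : ℕ, (0 : ℝ) < j + 1 / 2 := fun j => by positivity
  have hrow_eq : ∀ j k : ℕ, ((j : ℝ) + k + 1)⁻¹ * (√((k : ℝ) + 1 / 2))⁻¹ =
      (√((k : ℝ) + 1 / 2))⁻¹ * ((k : ℝ) + 1 / 2 + ((j : ℝ) + 1 / 2))⁻¹ := fun j k => by ring_nf
  simpa only [div_eq_mul_inv] using schur_test (K := fun j k : ℕ => ((j : ℝ) + k + 1)⁻¹)
    (p := fun k => (√((k : ℝ) + 1 / 2))⁻¹) (x := fun k => ‖a k‖) (C := π)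
    (fun _ _ => by positivity) (fun _ _ => by ring_nf) (fun k => by have := hc k; positivity)
    (fun _ => norm_nonneg _)
    (fun j => by simpa only [hrow_eq] using summable_inv_sqrt_mul_inv_add (hc j))
    (fun j => by
      simpa only [hrow_eq] using
        (tsum_inv_sqrt_mul_inv_add_le (hc j)).trans_eq (div_eq_mul_inv _ _))
    h
end

section
/- There exists a constant C > 0 such that for every square-summable sequence (v_k)_{k≥1} of complex numbers, ∫_0^π | Σ_{k≥1} b_k·v_k·cosh((2k-1)·(π/2)·(x-π)) |² dx ≤ C · Σ_{k≥1} |v_k|², where b_k = (-1)^k·√2 / sinh((2k-1)·π²/2). -/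
/-!
Each term of the series is at most `4√2 |v_k| e^{-(2k+1)x}` on `[0, π]`, so it suffices to bound
the discrete Laplace transform `a ↦ Σ a_k e^{-(2k+1)x}` from `ℓ²` to `L²(0, ∞)`. Squaring and
integrating turns its norm into the Hilbert-type form `Σ_{k,j} a_k a_j / ((2k+1) + (2j+1))`, which
the Schur test with weights `√(2k+1)` bounds by `π Σ a_k²`. The Schur sum
`Σ_j 1 / (√(2j+1) (2j+1+m)) ≤ π / √m` is compared, via the mean value theorem, with the
antiderivative `(2 / √m) arctan (√t / √m)` of `1 / (√t (t + m))`.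
-/

open Real MeasureTheory Set

lemma cosh_le_four_mul_exp_mul_sinh (a : ℝ) {b : ℝ} (hb : 1 ≤ b) :
    cosh a ≤ 4 * exp (|a| - b) * sinh b := by
  have hcosh : cosh a ≤ exp |a| := by
    rw [← cosh_abs, cosh_eq]
    linarith [exp_le_exp.2 (show -|a| ≤ |a| by linarith [abs_nonneg a])]
  have hsinh : exp b / 4 ≤ sinh b := by
    have h2b : 2 ≤ exp (2 * b) := by linarith [add_one_le_exp (2 * b)]
    have hsplit : exp (2 * b) = exp b * exp b := by rw [← exp_add, two_mul]
    have hneg : exp (-b) * exp b = 1 := by rw [← exp_add, neg_add_cancel, exp_zero]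
    rw [sinh_eq]
    nlinarith [exp_pos b, exp_pos (-b)]
  calc cosh a ≤ exp |a| := hcosh
    _ = 4 * exp (|a| - b) * (exp b / 4) := by rw [exp_sub]; field_simp
    _ ≤ 4 * exp (|a| - b) * sinh b := by gcongr

lemma cosh_div_sinh_le_four_mul_exp {β x : ℝ} (hβ : 1 ≤ β) (hx0 : 0 ≤ x) (hxπ : x ≤ π) :
    cosh (β * (π / 2) * (x - π)) / sinh (β * π ^ 2 / 2) ≤ 4 * exp (-β * x) := by
  have hπ : 2 ≤ π := by linarith [pi_gt_three]
  have hb : 1 ≤ β * π ^ 2 / 2 := by nlinarith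
  have habs : |β * (π / 2) * (x - π)| = β * (π / 2) * (π - x) := by
    rw [abs_of_nonpos (mul_nonpos_of_nonneg_of_nonpos (by positivity) (by linarith))]
    ring
  have hexp : |β * (π / 2) * (x - π)| - β * π ^ 2 / 2 ≤ -β * x := by
    rw [habs]; nlinarith [mul_nonneg (by linarith : (0 : ℝ) ≤ β) hx0]
  rw [div_le_iff₀ (sinh_pos_iff.2 (by linarith))]
  calc cosh (β * (π / 2) * (x - π))
      ≤ 4 * exp (|β * (π / 2) * (x - π)| - β * π ^ 2 / 2) * sinh (β * π ^ 2 / 2) :=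
        cosh_le_four_mul_exp_mul_sinh _ hb
    _ ≤ 4 * exp (-β * x) * sinh (β * π ^ 2 / 2) := by gcongr

lemma norm_neumann_term_le (k : ℕ) (z : ℂ) {x : ℝ} (hx0 : 0 ≤ x) (hxπ : x ≤ π) :
    ‖(((-1 : ℝ) ^ (k + 1) * √2 / sinh ((2 * (k : ℝ) + 1) * π ^ 2 / 2) : ℝ) : ℂ) * z *
        ((cosh ((2 * (k : ℝ) + 1) * (π / 2) * (x - π)) : ℝ) : ℂ)‖ ≤
      4 * √2 * ‖z‖ * exp (-(2 * k + 1) * x) := by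
  have hβ : (1 : ℝ) ≤ 2 * k + 1 := by linarith [k.cast_nonneg (α := ℝ)]
  have hsinh : 0 < sinh ((2 * (k : ℝ) + 1) * π ^ 2 / 2) := sinh_pos_iff.2 (by positivity)
  have key := cosh_div_sinh_le_four_mul_exp hβ hx0 hxπ
  rw [norm_mul, norm_mul, Complex.norm_real, Complex.norm_real, norm_div, norm_mul, norm_pow,
    norm_neg, norm_one, one_pow, one_mul, Real.norm_of_nonneg (sqrt_nonneg 2),
    Real.norm_of_nonneg hsinh.le, Real.norm_of_nonneg (cosh_pos _).le]
  calc √2 / sinh ((2 * (k : ℝ) + 1) * π ^ 2 / 2) * ‖z‖ * cosh ((2 * k + 1) * (π / 2) * (x - π))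
      = √2 * ‖z‖ * (cosh ((2 * k + 1) * (π / 2) * (x - π)) /
          sinh ((2 * (k : ℝ) + 1) * π ^ 2 / 2)) := by ring
    _ ≤ √2 * ‖z‖ * (4 * exp (-(2 * k + 1) * x)) := by gcongr
    _ = 4 * √2 * ‖z‖ * exp (-(2 * k + 1) * x) := by ring

lemma hasDerivAt_arctan_sqrt_div {m t : ℝ} (hm : 0 < m) (ht : 0 < t) :
    HasDerivAt (fun s => 2 / √m * arctan (√s / √m)) (1 / (√t * (t + m))) t := by
  have hsm : 0 < √m := sqrt_pos.2 hm
  have hst : 0 < √t := sqrt_pos.2 ht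
  refine ((((hasDerivAt_sqrt ht.ne').div_const √m).arctan).const_mul (2 / √m)).congr_deriv ?_
  rw [div_pow, sq_sqrt ht.le, sq_sqrt hm.le]
  field_simp
  rw [sq_sqrt hm.le]
  ring

lemma sum_range_one_div_sqrt_mul_add_le {m : ℝ} (hm : 0 < m) (n : ℕ) :
    ∑ k ∈ Finset.range n, 1 / (√(2 * k + 1) * (2 * k + 1 + m)) ≤ π / √m := by
  set G : ℝ → ℝ := fun s => 2 / √m * arctan (√s / √m)
  have hsm : 0 < √m := sqrt_pos.2 hm
  have hG_mono : Monotone G := fun s t hst =>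
    mul_le_mul_of_nonneg_left (arctan_strictMono.monotone (by gcongr)) (by positivity)
  have step (k : ℕ) : 1 / (√(2 * k + 1) * (2 * k + 1 + m)) ≤ G (2 * (k + 1)) - G (2 * k) := by
    obtain ⟨ξ, ⟨hξ0, hξ1⟩, hξ⟩ := exists_hasDerivAt_eq_slope G (fun t => 1 / (√t * (t + m)))
      (show (2 * k : ℝ) < 2 * k + 1 by linarith)
      ((continuous_const.mul (continuous_arctan.comp
        (continuous_sqrt.div_const _))).continuousOn)
      (fun t ht => hasDerivAt_arctan_sqrt_div hm (by linarith [ht.1, k.cast_nonneg (α := ℝ)]))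
    have hξpos : 0 < ξ := by linarith [k.cast_nonneg (α := ℝ)]
    calc 1 / (√(2 * k + 1) * (2 * k + 1 + m)) ≤ 1 / (√ξ * (ξ + m)) := by
          gcongr
      _ = G (2 * k + 1) - G (2 * k) := by rw [hξ]; ring
      _ ≤ G (2 * (k + 1)) - G (2 * k) := by gcongr; exact hG_mono (by linarith)
  calc ∑ k ∈ Finset.range n, 1 / (√(2 * k + 1) * (2 * k + 1 + m))
      ≤ ∑ k ∈ Finset.range n, (G (2 * (k + 1)) - G (2 * k)) := Finset.sum_le_sum fun k _ => step k
    _ = G (2 * n) - G 0 := by simpa using Finset.sum_range_sub (fun k : ℕ => G (2 * k)) n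
    _ ≤ 2 / √m * (π / 2) - 0 := by
        simp only [G, sqrt_zero, zero_div, arctan_zero, mul_zero]
        gcongr
        exact (arctan_lt_pi_div_two _).le
    _ = π / √m := by ring

lemma tsum_ofReal_one_div_sqrt_mul_add_le {m : ℝ} (hm : 0 < m) :
    ∑' j : ℕ, ENNReal.ofReal (1 / (√(2 * j + 1) * (2 * j + 1 + m))) ≤ ENNReal.ofReal (π / √m) :=
  ENNReal.tsum_le_of_sum_range_le fun n => by
    rw [← ENNReal.ofReal_sum_of_nonneg fun j _ => by positivity]
    exact ENNReal.ofReal_le_ofReal (sum_range_one_div_sqrt_mul_add_le hm n)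

lemma mul_div_add_le_sqrt_weighted (a b : ℝ) {p q : ℝ} (hp : 0 < p) (hq : 0 < q) :
    a * b / (p + q) ≤ 2⁻¹ * (a ^ 2 * √p * (1 / (√q * (q + p)))) +
      2⁻¹ * (b ^ 2 * √q * (1 / (√p * (p + q)))) := by
  have hsp : 0 < √p := sqrt_pos.2 hp
  have hsq : 0 < √q := sqrt_pos.2 hq
  have hp2 := sq_sqrt hp.le
  have hq2 := sq_sqrt hq.le
  rw [div_le_iff₀ (by positivity)]
  field_simp
  nlinarith [sq_nonneg (a * √p - b * √q), mul_pos hsp hsq]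

lemma tsum_tsum_ofReal_mul_div_add_le (a : ℕ → ℝ) :
    ∑' k, ∑' j, ENNReal.ofReal (a k * a j / ((2 * k + 1) + (2 * j + 1))) ≤
      ENNReal.ofReal π * ∑' k, ENNReal.ofReal (a k ^ 2) := by
  set T : ℕ → ℕ → ENNReal := fun k j => ENNReal.ofReal (a k ^ 2 * √(2 * k + 1)) *
    ENNReal.ofReal (1 / (√(2 * j + 1) * (2 * j + 1 + (2 * k + 1))))
  have half_mul {x y : ℝ} (hx : 0 ≤ x) :
      ENNReal.ofReal (2⁻¹ * (x * y)) = 2⁻¹ * (ENNReal.ofReal x * ENNReal.ofReal y) := by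
    rw [ENNReal.ofReal_mul (by norm_num), ENNReal.ofReal_mul hx,
      ENNReal.ofReal_inv_of_pos two_pos, ENNReal.ofReal_ofNat]
  have hT (k j : ℕ) : ENNReal.ofReal (a k * a j / ((2 * k + 1) + (2 * j + 1))) ≤
      2⁻¹ * T k j + 2⁻¹ * T j k := by
    refine (ENNReal.ofReal_le_ofReal
      (mul_div_add_le_sqrt_weighted (a k) (a j) (by positivity) (by positivity))).trans_eq ?_
    rw [ENNReal.ofReal_add (by positivity) (by positivity), half_mul (by positivity),
      half_mul (by positivity)]
  have hT_row (k : ℕ) : ∑' j, T k j ≤ ENNReal.ofReal π * ENNReal.ofReal (a k ^ 2) := by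
    have hk : 0 < √(2 * (k : ℝ) + 1) := sqrt_pos.2 (by positivity)
    calc ∑' j, T k j
        ≤ ENNReal.ofReal (a k ^ 2 * √(2 * k + 1)) * ENNReal.ofReal (π / √(2 * k + 1)) := by
          rw [ENNReal.tsum_mul_left]
          gcongr
          exact tsum_ofReal_one_div_sqrt_mul_add_le (by positivity)
      _ = ENNReal.ofReal π * ENNReal.ofReal (a k ^ 2) := by
          rw [← ENNReal.ofReal_mul (by positivity), ← ENNReal.ofReal_mul pi_pos.le]
          congr 1
          field_simp
  calc ∑' k, ∑' j, ENNReal.ofReal (a k * a j / ((2 * k + 1) + (2 * j + 1)))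
      ≤ ∑' k, ∑' j, (2⁻¹ * T k j + 2⁻¹ * T j k) :=
        ENNReal.tsum_le_tsum fun k => ENNReal.tsum_le_tsum fun j => hT k j
    _ = 2⁻¹ * ∑' k, ∑' j, T k j + 2⁻¹ * ∑' k, ∑' j, T k j := by
        simp only [ENNReal.tsum_add, ENNReal.tsum_mul_left]
        rw [ENNReal.tsum_comm (f := fun k j => T j k)]
    _ = ∑' k, ∑' j, T k j := by rw [← add_mul, ENNReal.inv_two_add_inv_two, one_mul]
    _ ≤ ∑' k, ENNReal.ofReal π * ENNReal.ofReal (a k ^ 2) := ENNReal.tsum_le_tsum hT_row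
    _ = ENNReal.ofReal π * ∑' k, ENNReal.ofReal (a k ^ 2) := ENNReal.tsum_mul_left

lemma lintegral_Ioi_ofReal_exp_neg_mul {l : ℝ} (hl : 0 < l) :
    ∫⁻ x in Ioi 0, ENNReal.ofReal (exp (-l * x)) = ENNReal.ofReal (1 / l) := by
  rw [← ofReal_integral_eq_lintegral_ofReal (exp_neg_integrableOn_Ioi 0 hl)
    (ae_of_all _ fun x => (exp_pos _).le), integral_exp_mul_Ioi (neg_lt_zero.2 hl)]
  congr 1
  simp [div_neg, neg_div]

lemma lintegral_Ioi_sq_tsum_ofReal_mul_exp_le {a : ℕ → ℝ} (ha : ∀ k, 0 ≤ a k) :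
    ∫⁻ x in Ioi 0, (∑' k, ENNReal.ofReal (a k * exp (-(2 * k + 1) * x))) ^ 2 ≤
      ENNReal.ofReal π * ∑' k, ENNReal.ofReal (a k ^ 2) := by
  set u : ℕ → ℝ → ENNReal := fun k x => ENNReal.ofReal (a k * exp (-(2 * k + 1) * x))
  have hu (k : ℕ) : Measurable (u k) := by fun_prop
  have hprod (k j : ℕ) (x : ℝ) : u k x * u j x =
      ENNReal.ofReal (a k * a j) * ENNReal.ofReal (exp (-((2 * k + 1) + (2 * j + 1)) * x)) := by
    simp only [u]
    rw [← ENNReal.ofReal_mul (mul_nonneg (ha k) (exp_pos _).le),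
      ← ENNReal.ofReal_mul (mul_nonneg (ha k) (ha j))]
    congr 1
    rw [show -((2 * (k : ℝ) + 1) + (2 * j + 1)) * x = -(2 * k + 1) * x + -(2 * j + 1) * x by ring,
      exp_add]
    ring
  calc ∫⁻ x in Ioi 0, (∑' k, u k x) ^ 2
      = ∫⁻ x in Ioi 0, ∑' k, ∑' j, u k x * u j x := by
        congr 1
        funext x
        rw [sq, ← ENNReal.tsum_mul_right]
        exact tsum_congr fun k => ENNReal.tsum_mul_left.symm
    _ = ∑' k, ∑' j, ∫⁻ x in Ioi 0, u k x * u j x := by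
        rw [lintegral_tsum fun k => (Measurable.tsum (f := fun j x => u k x * u j x)
          fun j => (hu k).mul (hu j)).aemeasurable]
        exact tsum_congr fun k => lintegral_tsum fun j => ((hu k).mul (hu j)).aemeasurable
    _ = ∑' k, ∑' j, ENNReal.ofReal (a k * a j / ((2 * k + 1) + (2 * j + 1))) := by
        refine tsum_congr fun k => tsum_congr fun j => ?_
        simp_rw [hprod]
        rw [lintegral_const_mul _ (by fun_prop), lintegral_Ioi_ofReal_exp_neg_mul (by positivity),
          ← ENNReal.ofReal_mul (mul_nonneg (ha k) (ha j)), mul_one_div]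
    _ ≤ ENNReal.ofReal π * ∑' k, ENNReal.ofReal (a k ^ 2) := tsum_tsum_ofReal_mul_div_add_le a

lemma ofReal_intervalIntegral_norm_sq_le {E : Type*} [NormedAddCommGroup E] {g : ℝ → E}
    {h : ℝ → ENNReal} {a b : ℝ} (hab : a ≤ b) (hgh : ∀ x ∈ Ioc a b, ‖g x‖ₑ ≤ h x) :
    ENNReal.ofReal (∫ x in a..b, ‖g x‖ ^ 2) ≤ ∫⁻ x in Ioc a b, h x ^ 2 := by
  rw [intervalIntegral.integral_of_le hab]
  calc ENNReal.ofReal (∫ x in Ioc a b, ‖g x‖ ^ 2)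
      ≤ ‖∫ x in Ioc a b, ‖g x‖ ^ 2‖ₑ := ofReal_le_enorm _
    _ ≤ ∫⁻ x in Ioc a b, ‖‖g x‖ ^ 2‖ₑ := enorm_integral_le_lintegral_enorm _
    _ ≤ ∫⁻ x in Ioc a b, h x ^ 2 := setLIntegral_mono' measurableSet_Ioc fun x hx => by
        rw [enorm_pow, enorm_norm]
        gcongr
        exact hgh x hx

/-- There is `C > 0` such that for every square-summable sequence `(v_k)_{k≥1}` of complex
numbers, `∫₀^π |Σ_{k≥1} b_k v_k cosh((2k-1)(π/2)(x-π))|² dx ≤ C Σ_{k≥1} |v_k|²`,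
where `b_k = (-1)^k √2 / sinh((2k-1)π²/2)`.
(The sequence is encoded as `v : ℕ → ℂ` with `v k` standing for `v_{k+1}`.) -/
theorem neumann_to_neumann_bounded :
    ∃ C : ℝ, 0 < C ∧ ∀ v : ℕ → ℂ, (Summable fun k : ℕ => ‖v k‖ ^ 2) →
      ∫ x in (0:ℝ)..π,
          ‖∑' k : ℕ, (((-1 : ℝ) ^ (k + 1) * Real.sqrt 2 /
                Real.sinh ((2 * (k : ℝ) + 1) * π ^ 2 / 2) : ℝ) : ℂ) * v k *
              ((Real.cosh ((2 * (k : ℝ) + 1) * (π / 2) * (x - π)) : ℝ) : ℂ)‖ ^ 2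
        ≤ C * ∑' k : ℕ, ‖v k‖ ^ 2 := by
  refine ⟨32 * π, by positivity, fun v hv => ?_⟩
  have hsum : ∑' k, ENNReal.ofReal ((4 * √2 * ‖v k‖) ^ 2) =
      ENNReal.ofReal (32 * ∑' k, ‖v k‖ ^ 2) := by
    have hsq (k : ℕ) : (4 * √2 * ‖v k‖) ^ 2 = 32 * ‖v k‖ ^ 2 := by
      rw [mul_pow, mul_pow, sq_sqrt zero_le_two]; ring
    simp_rw [hsq]
    rw [← tsum_mul_left, ENNReal.ofReal_tsum_of_nonneg (fun k => by positivity) (hv.mul_left 32)]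
  rw [← ENNReal.ofReal_le_ofReal_iff (by positivity)]
  calc _ ≤ ∫⁻ x in Ioc 0 π, (∑' k, ENNReal.ofReal (4 * √2 * ‖v k‖ * exp (-(2 * k + 1) * x))) ^ 2 :=
        ofReal_intervalIntegral_norm_sq_le pi_pos.le fun x ⟨hx0, hxπ⟩ =>
          enorm_tsum_le_tsum_enorm.trans <| ENNReal.tsum_le_tsum fun k => by
            rw [← ofReal_norm]
            exact ENNReal.ofReal_le_ofReal (norm_neumann_term_le k (v k) hx0.le hxπ)
    _ ≤ ∫⁻ x in Ioi 0, (∑' k, ENNReal.ofReal (4 * √2 * ‖v k‖ * exp (-(2 * k + 1) * x))) ^ 2 :=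
        lintegral_mono_set Ioc_subset_Ioi_self
    _ ≤ ENNReal.ofReal π * ENNReal.ofReal (32 * ∑' k, ‖v k‖ ^ 2) :=
        hsum ▸ lintegral_Ioi_sq_tsum_ofReal_mul_exp_le fun k => by positivity
    _ = ENNReal.ofReal (32 * π * ∑' k, ‖v k‖ ^ 2) := by
        rw [← ENNReal.ofReal_mul pi_pos.le]
        congr 1
        ring
end

section
/- Let μ_k = √(k·tanh(k)) for every integer k ≥ 1, and set μ_{-k} = -μ_k. Then there exists ε > 0 such that for every ω ∈ ℝ with |ω| ≥ 1, the closed interval [ω - ε/|ω|, ω + ε/|ω|] contains at most one element of the set { μ_k : k ∈ ℤ, k ≠ 0 }. -/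
open Real

/-- `μ_k = sign(k) √(|k| tanh |k|)` for `k ∈ ℤ`, with `μ_{-k} = -μ_k`. -/
noncomputable def muZ (k : ℤ) : ℝ :=
  (if k < 0 then (-1 : ℝ) else 1) * Real.sqrt (|(k : ℝ)| * Real.tanh |(k : ℝ)|)

/-!
Work with the signed squares `μ_k |μ_k| = k tanh |k|`: since `t ↦ t tanh t` is increasing and
gains at least `tanh 1` over every unit step, distinct `μ_j, μ_k` have signed squares at least
`tanh 1` apart. On the other hand `|a|a| - b|b|| ≤ |a - b| (|a| + |b|)`, and two points of
`[ω - ε/|ω|, ω + ε/|ω|]` are `2ε/|ω|` close while of size about `|ω|`, so their signed squares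
differ by at most `4ε(1 + ε)`, which is below `tanh 1` for `ε = tanh 1 / 8`.
-/

namespace Real

theorem tanh_strictMono : StrictMono tanh := fun a b hab => by
  rwa [← artanh_lt_artanh_iff (abs_lt.mp (abs_tanh_lt_one a)) (abs_lt.mp (abs_tanh_lt_one b)),
    artanh_tanh, artanh_tanh]

theorem tanh_nonneg {x : ℝ} (hx : 0 ≤ x) : 0 ≤ tanh x := by
  simpa using tanh_strictMono.monotone hx

theorem tanh_one_le_mul_tanh_sub {s t : ℝ} (hs : 0 ≤ s) (hst : s + 1 ≤ t) :
    tanh 1 ≤ t * tanh t - s * tanh s := by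
  have h1 : tanh 1 ≤ tanh t := tanh_strictMono.monotone (by linarith)
  have hst' : tanh s ≤ tanh t := tanh_strictMono.monotone (by linarith)
  nlinarith [tanh_nonneg hs]

end Real

theorem tanh_one_le_int_mul_tanh_abs_sub {j k : ℤ} (hjk : j < k) :
    tanh 1 ≤ k * tanh |(k : ℝ)| - j * tanh |(j : ℝ)| := by
  have hjk' : (j : ℝ) + 1 ≤ k := by exact_mod_cast hjk
  rcases le_or_gt 0 j with hj | hj
  · have hj' : (0 : ℝ) ≤ j := by exact_mod_cast hj
    rw [abs_of_nonneg hj', abs_of_nonneg (by linarith)]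
    exact tanh_one_le_mul_tanh_sub hj' hjk'
  rcases le_or_gt k 0 with hk | hk
  · have hk' : (k : ℝ) ≤ 0 := by exact_mod_cast hk
    rw [abs_of_nonpos hk', abs_of_nonpos (by linarith)]
    linarith [tanh_one_le_mul_tanh_sub (neg_nonneg.mpr hk') (by linarith : -(k : ℝ) + 1 ≤ -j)]
  · have hj' : (j : ℝ) < 0 := by exact_mod_cast hj
    have hk' : (0 : ℝ) + 1 ≤ k := by exact_mod_cast hk
    rw [abs_of_neg hj', abs_of_pos (by linarith)]
    have := tanh_one_le_mul_tanh_sub le_rfl hk'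
    nlinarith [tanh_nonneg (neg_nonneg.mpr hj'.le)]

theorem abs_mul_abs_self_sub_mul_abs_self_le (a b : ℝ) :
    |(a * |a| - b * |b|)| ≤ |a - b| * (|a| + |b|) := by
  have key : a * |a| - b * |b| = ((a - b) * (|a| + |b|) + (a + b) * (|a| - |b|)) / 2 := by ring
  have h₁ : |(a - b) * (|a| + |b|)| = |a - b| * (|a| + |b|) := by
    rw [abs_mul, abs_of_nonneg (by positivity : 0 ≤ |a| + |b|)]
  have h₂ : |(a + b) * (|a| - |b|)| ≤ |a - b| * (|a| + |b|) := by
    rw [abs_mul, mul_comm]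
    exact mul_le_mul (abs_abs_sub_abs_le_abs_sub a b) (abs_add_le a b) (abs_nonneg _) (abs_nonneg _)
  rw [key, abs_div, abs_two, div_le_iff₀ two_pos]
  linarith [abs_add_le ((a - b) * (|a| + |b|)) ((a + b) * (|a| - |b|))]

theorem subsingleton_inter_Icc_of_mul_abs_self_separated {S : Set ℝ} {δ ε ω : ℝ}
    (hS : ∀ a ∈ S, ∀ b ∈ S, a ≠ b → δ ≤ |(a * |a| - b * |b|)|) (hε : 0 < ε)
    (hεδ : 4 * ε * (1 + ε) < δ) (hω : 1 ≤ |ω|) :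
    (S ∩ Set.Icc (ω - ε / |ω|) (ω + ε / |ω|)).Subsingleton := by
  rintro x ⟨hxS, hx₁, hx₂⟩ y ⟨hyS, hy₁, hy₂⟩
  by_contra hxy
  set r := ε / |ω|
  have hr₀ : 0 ≤ r := by positivity
  have hrε : r ≤ ε := div_le_self hε.le hω
  have hrω : r * |ω| = ε := div_mul_cancel₀ ε (by positivity)
  have hxω : |x - ω| ≤ r := abs_sub_le_iff.mpr ⟨by linarith, by linarith⟩
  have hyω : |y - ω| ≤ r := abs_sub_le_iff.mpr ⟨by linarith, by linarith⟩
  have hxy_dist : |x - y| ≤ 2 * r := by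
    linarith [abs_sub_le x ω y, abs_sub_comm ω y]
  have hxy_size : |x| + |y| ≤ 2 * (|ω| + r) := by
    linarith [abs_sub_abs_le_abs_sub x ω, abs_sub_abs_le_abs_sub y ω]
  have : δ ≤ 4 * ε * (1 + ε) :=
    calc δ ≤ |(x * |x| - y * |y|)| := hS x hxS y hyS hxy
      _ ≤ |x - y| * (|x| + |y|) := abs_mul_abs_self_sub_mul_abs_self_le x y
      _ ≤ 2 * r * (2 * (|ω| + r)) := by gcongr
      _ = 4 * ε + 4 * r * r := by rw [← hrω]; ring
      _ ≤ 4 * ε * (1 + ε) := by nlinarith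
  linarith

theorem muZ_mul_abs (k : ℤ) : muZ k * |muZ k| = k * tanh |(k : ℝ)| := by
  unfold muZ
  set r := √(|(k : ℝ)| * tanh |(k : ℝ)|)
  have hr₀ : 0 ≤ r := sqrt_nonneg _
  have hrr : r * r = |(k : ℝ)| * tanh |(k : ℝ)| :=
    mul_self_sqrt (mul_nonneg (abs_nonneg _) (tanh_nonneg (abs_nonneg _)))
  split_ifs with hk
  · have hk' : (k : ℝ) < 0 := by exact_mod_cast hk
    rw [abs_mul, abs_neg, abs_one, one_mul, abs_of_nonneg hr₀, mul_assoc, hrr, abs_of_neg hk']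
    ring
  · have hk' : (0 : ℝ) ≤ k := by exact_mod_cast not_lt.mp hk
    rw [one_mul, abs_of_nonneg hr₀, hrr, abs_of_nonneg hk']

theorem tanh_one_le_abs_muZ_mul_abs_sub {j k : ℤ} (hjk : j ≠ k) :
    tanh 1 ≤ |(muZ j * |muZ j| - muZ k * |muZ k|)| := by
  rw [muZ_mul_abs, muZ_mul_abs]
  rcases hjk.lt_or_gt with h | h
  · exact (tanh_one_le_int_mul_tanh_abs_sub h).trans ((le_abs_self _).trans_eq (abs_sub_comm _ _))
  · exact (tanh_one_le_int_mul_tanh_abs_sub h).trans (le_abs_self _)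

/-- There exists `ε > 0` such that for every `ω` with `|ω| ≥ 1`, the interval
`[ω - ε/|ω|, ω + ε/|ω|]` contains at most one element of `{μ_k : k ∈ ℤ, k ≠ 0}`. -/
theorem muZ_spectral_gap :
    ∃ ε : ℝ, 0 < ε ∧ ∀ ω : ℝ, 1 ≤ |ω| →
      Set.Subsingleton
        ({x : ℝ | ∃ k : ℤ, k ≠ 0 ∧ x = muZ k} ∩
          Set.Icc (ω - ε / |ω|) (ω + ε / |ω|)) := by
  have htanh_pos : 0 < tanh 1 := by simpa using tanh_strictMono one_pos
  refine ⟨tanh 1 / 8, by positivity, fun ω hω => ?_⟩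
  refine subsingleton_inter_Icc_of_mul_abs_self_separated (δ := tanh 1) ?_ (by positivity)
    (by nlinarith [tanh_lt_one 1]) hω
  rintro _ ⟨j, -, rfl⟩ _ ⟨k, -, rfl⟩ hne
  exact tanh_one_le_abs_muZ_mul_abs_sub fun h => hne (h ▸ rfl)
end

section
/- Let ε ∈ (0,1) and let h : [-1,0] → ℝ be continuously differentiable with ∫_{-1}^0 h(y) dy = 0 and sup_{y∈[-1,0]} |h'(y)| < ((1-ε)·tanh(1) / (1 - 2/e)) · |h(0)|, where e is the base of the natural logarithm. Then inf over integers k ≥ 1 of (k / cosh(k)) · | ∫_{-1}^0 h(y)·cosh(k·(y+1)) dy | is strictly positive. -/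
/-!
Integrate by parts against `g y = sinh (κ (y + 1)) - κ (y + 1)`, which vanishes at `y = -1` and
has `g' = κ cosh (κ (y + 1)) - κ`; as `h` has zero mean this gives
`κ ∫ h cosh (κ (y + 1)) = h 0 (sinh κ - κ) - ∫ h' g`.
Since `g ≥ 0` and `κ ∫ g = cosh κ - 1 - κ² / 2 ≤ κ (sinh κ - κ) / 4`, the error term is at most
`(1 - ε) |h 0| (sinh κ - κ)` once `sup |h'| ≤ (1 - ε) c |h 0|` with `c ≤ 4`; the constant
`tanh 1 / (1 - 2 / e) ≈ 2.88` is such a `c`. Hence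
`κ |∫ h cosh (κ (y + 1))| ≥ ε |h 0| (sinh κ - κ)`, and
`(sinh κ - κ) / cosh κ ≥ (sinh 1 - 1) / cosh 1` for `κ ≥ 1`.
-/

open Real

theorem le_of_hasDerivAt_of_nonneg {f f' : ℝ → ℝ} {a t : ℝ} (hf : ∀ x, HasDerivAt f (f' x) x)
    (hf' : ∀ x, a ≤ x → 0 ≤ f' x) (ht : a ≤ t) : f a ≤ f t := by
  refine monotoneOn_of_hasDerivWithinAt_nonneg (convex_Ici a)
    (fun x _ => (hf x).continuousAt.continuousWithinAt) (fun x _ => (hf x).hasDerivWithinAt)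
    (fun x hx => hf' x ?_) Set.self_mem_Ici ht ht
  rw [interior_Ici] at hx
  exact le_of_lt hx

namespace Real

theorem one_add_sq_div_two_le_cosh {t : ℝ} (ht : 0 ≤ t) : 1 + t ^ 2 / 2 ≤ cosh t := by
  have := le_of_hasDerivAt_of_nonneg (f := fun x => cosh x - x ^ 2 / 2)
    (f' := fun x => sinh x - x)
    (fun x => ((hasDerivAt_cosh x).sub ((hasDerivAt_pow 2 x).div_const 2)).congr_deriv (by ring))
    (fun x hx => sub_nonneg.2 (self_le_sinh_iff.2 hx)) ht
  simp only [cosh_zero] at this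
  linarith

theorem sinh_le_mul_cosh {t : ℝ} (ht : 0 ≤ t) : sinh t ≤ t * cosh t := by
  have := le_of_hasDerivAt_of_nonneg (f := fun x => x * cosh x - sinh x)
    (f' := fun x => x * sinh x)
    (fun x => (((hasDerivAt_id x).mul (hasDerivAt_cosh x)).sub (hasDerivAt_sinh x)).congr_deriv
      (by simp))
    (fun x hx => mul_nonneg hx (sinh_nonneg_iff.2 hx)) ht
  simp only [sinh_zero] at this
  linarith

theorem two_mul_cosh_sub_one_le_mul_sinh {t : ℝ} (ht : 0 ≤ t) :
    2 * (cosh t - 1) ≤ t * sinh t := by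
  have := le_of_hasDerivAt_of_nonneg (f := fun x => x * sinh x - 2 * (cosh x - 1))
    (f' := fun x => x * cosh x - sinh x)
    (fun x => (((hasDerivAt_id x).mul (hasDerivAt_sinh x)).sub
      (((hasDerivAt_cosh x).sub_const 1).const_mul 2)).congr_deriv (by simp; ring))
    (fun x hx => sub_nonneg.2 (sinh_le_mul_cosh hx)) ht
  simp only [cosh_zero] at this
  linarith

theorem three_mul_sinh_le {t : ℝ} (ht : 0 ≤ t) : 3 * sinh t ≤ t * cosh t + 2 * t := by
  have := le_of_hasDerivAt_of_nonneg (f := fun x => x * cosh x + 2 * x - 3 * sinh x)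
    (f' := fun x => x * sinh x + 2 - 2 * cosh x)
    (fun x => ((((hasDerivAt_id x).mul (hasDerivAt_cosh x)).add
      ((hasDerivAt_id x).const_mul 2)).sub ((hasDerivAt_sinh x).const_mul 3)).congr_deriv
      (by simp; ring))
    (fun x hx => by linarith [two_mul_cosh_sub_one_le_mul_sinh hx]) ht
  simp only [sinh_zero] at this
  linarith

theorem four_mul_cosh_sub_one_sub_sq_le {t : ℝ} (ht : 0 ≤ t) :
    4 * (cosh t - 1 - t ^ 2 / 2) ≤ t * (sinh t - t) := by
  have := le_of_hasDerivAt_of_nonneg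
    (f := fun x => x * (sinh x - x) - 4 * (cosh x - 1 - x ^ 2 / 2))
    (f' := fun x => x * cosh x + 2 * x - 3 * sinh x)
    (fun x => (((hasDerivAt_id x).mul ((hasDerivAt_sinh x).sub (hasDerivAt_id x))).sub
      ((((hasDerivAt_cosh x).sub_const 1).sub ((hasDerivAt_pow 2 x).div_const 2)).const_mul
        4)).congr_deriv (by simp; ring))
    (fun x hx => by linarith [three_mul_sinh_le hx]) ht
  simp only [cosh_zero, sinh_zero] at this
  linarith

theorem sinh_one_mul_le_sinh {t : ℝ} (ht : 1 ≤ t) : sinh 1 * t ≤ sinh t := by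
  have := le_of_hasDerivAt_of_nonneg (f := fun x => sinh x - sinh 1 * x)
    (f' := fun x => cosh x - sinh 1)
    (fun x => ((hasDerivAt_sinh x).sub ((hasDerivAt_id x).const_mul (sinh 1))).congr_deriv
      (by simp))
    (fun x hx => ?_) ht
  · linarith
  · have hcosh : cosh 1 ≤ cosh x := cosh_le_cosh.2 (abs_le_abs hx (by linarith))
    linarith [cosh_sub_sinh 1, exp_pos (-1)]

theorem one_lt_sinh_one : 1 < sinh 1 := by
  rw [sinh_eq]
  linarith [exp_one_gt_d9, exp_neg_one_lt_d9]

theorem sinh_one_sub_one_mul_cosh_le {κ : ℝ} (hκ : 1 ≤ κ) :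
    (sinh 1 - 1) * cosh κ ≤ (sinh κ - κ) * cosh 1 := by
  have htanh : sinh 1 * cosh κ ≤ sinh κ * cosh 1 := by
    have := sinh_nonneg_iff.2 (sub_nonneg.2 hκ)
    rw [sinh_sub] at this
    linarith
  have hlin := sinh_one_mul_le_sinh hκ
  have h1 := one_lt_sinh_one
  have hpos : 0 < sinh 1 := by linarith
  refine le_of_mul_le_mul_left ?_ hpos
  nlinarith [cosh_pos 1, cosh_pos κ]

theorem tanh_one_div_one_sub_two_div_exp_le_four : tanh 1 / (1 - 2 / exp 1) ≤ 4 := by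
  have h2e : 2 / exp 1 < 3 / 4 := by
    rw [div_lt_iff₀ (exp_pos 1)]
    linarith [exp_one_gt_d9]
  rw [div_le_iff₀ (by linarith)]
  linarith [tanh_lt_one 1]

end Real

theorem IsCompact.le_biSup_of_continuousOn {X α : Type*} [TopologicalSpace X]
    [ConditionallyCompleteLinearOrder α] [TopologicalSpace α] [OrderTopology α]
    {s : Set X} (hs : IsCompact s) {f : X → α} (hf : ContinuousOn f s) {x : X} (hx : x ∈ s) :
    f x ≤ ⨆ y ∈ s, f y := by
  refine le_ciSup₂ (f := fun y (_ : y ∈ s) => f y)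
    ((hs.image_of_continuousOn hf).bddAbove.mono ?_) x hx
  rintro _ ⟨_, ⟨y, rfl⟩, hy, rfl⟩
  exact ⟨y, hy, rfl⟩

theorem abs_integral_mul_le_mul_integral {f g : ℝ → ℝ} {a b M : ℝ} (hab : a ≤ b)
    (hf : ∀ y ∈ Set.Icc a b, |f y| ≤ M) (hg : ∀ y ∈ Set.Icc a b, 0 ≤ g y)
    (hgi : IntervalIntegrable g MeasureTheory.volume a b) :
    |∫ y in a..b, f y * g y| ≤ M * ∫ y in a..b, g y := by
  rw [← intervalIntegral.integral_const_mul, ← Real.norm_eq_abs]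
  refine intervalIntegral.norm_integral_le_of_norm_le hab
    (Filter.Eventually.of_forall fun y hy => ?_) (hgi.const_mul M)
  have hy' := Set.Ioc_subset_Icc_self hy
  rw [Real.norm_eq_abs, abs_mul, abs_of_nonneg (hg y hy')]
  exact mul_le_mul_of_nonneg_right (hf y hy') (hg y hy')

theorem mul_integral_sinh_sub_eq (κ : ℝ) :
    κ * ∫ y in (-1:ℝ)..0, (sinh (κ * (y + 1)) - κ * (y + 1)) = cosh κ - 1 - κ ^ 2 / 2 := by
  have hsub : ∫ x in (0:ℝ)..κ, (sinh x - x) = cosh κ - 1 - κ ^ 2 / 2 := by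
    rw [intervalIntegral.integral_eq_sub_of_hasDerivAt
      (f := fun x => cosh x - x ^ 2 / 2)
      (f' := fun x => sinh x - x)
      (fun x _ => ((hasDerivAt_cosh x).sub ((hasDerivAt_pow 2 x).div_const 2)).congr_deriv
        (by ring))
      ((continuous_sinh.sub continuous_id).intervalIntegrable (μ := MeasureTheory.volume) 0 κ)]
    simp only [cosh_zero]; ring
  rw [← hsub]
  simpa [mul_add] using
    intervalIntegral.mul_integral_comp_mul_add (a := -1) (b := 0) (f := fun x => sinh x - x) κ κ

theorem mul_integral_mul_cosh_eq {h h' : ℝ → ℝ}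
    (hderiv : ∀ y ∈ Set.Icc (-1:ℝ) 0, HasDerivWithinAt h (h' y) (Set.Icc (-1:ℝ) 0) y)
    (hcont : ContinuousOn h' (Set.Icc (-1:ℝ) 0)) (hmean : ∫ y in (-1:ℝ)..0, h y = 0) (κ : ℝ) :
    κ * ∫ y in (-1:ℝ)..0, h y * cosh (κ * (y + 1)) =
      h 0 * (sinh κ - κ) - ∫ y in (-1:ℝ)..0, h' y * (sinh (κ * (y + 1)) - κ * (y + 1)) := by
  have hIcc : Set.uIcc (-1:ℝ) 0 = Set.Icc (-1) 0 := Set.uIcc_of_le (by norm_num)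
  have hh : ContinuousOn h (Set.uIcc (-1:ℝ) 0) :=
    hIcc ▸ fun y hy => (hderiv y hy).continuousWithinAt
  have hcosh : Continuous fun y : ℝ => cosh (κ * (y + 1)) := by fun_prop
  have hv : ∀ y, HasDerivAt (fun y => sinh (κ * (y + 1)) - κ * (y + 1))
      (κ * cosh (κ * (y + 1)) - κ) y := fun y => by
    have hlin : HasDerivAt (fun y => κ * (y + 1)) κ y := by
      simpa using ((hasDerivAt_id y).add_const 1).const_mul κ
    exact ((hlin.sinh).sub hlin).congr_deriv (by ring)
  have hparts := intervalIntegral.integral_mul_deriv_eq_deriv_mul_of_hasDerivWithinAt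
    (hIcc ▸ hderiv) (fun y _ => (hv y).hasDerivWithinAt)
    ((hIcc ▸ hcont : ContinuousOn h' _).intervalIntegrable)
    (((continuous_const.mul hcosh).sub continuous_const).intervalIntegrable _ _)
  have hsplit : ∫ y in (-1:ℝ)..0, h y * (κ * cosh (κ * (y + 1)) - κ) =
      κ * ∫ y in (-1:ℝ)..0, h y * cosh (κ * (y + 1)) := by
    simp_rw [mul_sub, mul_left_comm _ κ]
    rw [intervalIntegral.integral_sub, intervalIntegral.integral_const_mul,
      intervalIntegral.integral_mul_const, hmean]
    · simp
    · exact (hh.mul hcosh.continuousOn).intervalIntegrable.const_mul κ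
    · exact hh.intervalIntegrable.mul_const κ
  simpa [hsplit] using hparts

theorem mul_sinh_sub_le_abs_mul_integral {h h' : ℝ → ℝ} {ε c M κ : ℝ}
    (hderiv : ∀ y ∈ Set.Icc (-1:ℝ) 0, HasDerivWithinAt h (h' y) (Set.Icc (-1:ℝ) 0) y)
    (hcont : ContinuousOn h' (Set.Icc (-1:ℝ) 0)) (hmean : ∫ y in (-1:ℝ)..0, h y = 0)
    (hM : ∀ y ∈ Set.Icc (-1:ℝ) 0, |h' y| ≤ M) (hMc : M ≤ (1 - ε) * c * |h 0|) (hc : c ≤ 4)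
    (hε : ε ≤ 1) (hκ : 0 < κ) :
    ε * |h 0| * (sinh κ - κ) ≤ |κ * ∫ y in (-1:ℝ)..0, h y * cosh (κ * (y + 1))| := by
  set D := ∫ y in (-1:ℝ)..0, h' y * (sinh (κ * (y + 1)) - κ * (y + 1))
  have hg : ∀ y ∈ Set.Icc (-1:ℝ) 0, 0 ≤ sinh (κ * (y + 1)) - κ * (y + 1) := fun y hy =>
    sub_nonneg.2 (self_le_sinh_iff.2 (mul_nonneg hκ.le (by linarith [hy.1])))
  have hD : |D| ≤ M * ∫ y in (-1:ℝ)..0, (sinh (κ * (y + 1)) - κ * (y + 1)) :=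
    abs_integral_mul_le_mul_integral (by norm_num) hM hg
      (Continuous.intervalIntegrable (by fun_prop) _ _)
  have hE := mul_integral_sinh_sub_eq κ
  have hE0 : 0 ≤ cosh κ - 1 - κ ^ 2 / 2 := by linarith [one_add_sq_div_two_le_cosh hκ.le]
  have hkey : c * (cosh κ - 1 - κ ^ 2 / 2) ≤ κ * (sinh κ - κ) := by
    nlinarith [four_mul_cosh_sub_one_sub_sq_le hκ.le]
  have hDκ : κ * |D| ≤ κ * ((1 - ε) * |h 0| * (sinh κ - κ)) := by
    calc κ * |D| ≤ M * (cosh κ - 1 - κ ^ 2 / 2) := by rw [← hE]; nlinarith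
      _ ≤ (1 - ε) * c * |h 0| * (cosh κ - 1 - κ ^ 2 / 2) := mul_le_mul_of_nonneg_right hMc hE0
      _ = (1 - ε) * |h 0| * (c * (cosh κ - 1 - κ ^ 2 / 2)) := by ring
      _ ≤ (1 - ε) * |h 0| * (κ * (sinh κ - κ)) :=
        mul_le_mul_of_nonneg_left hkey (mul_nonneg (by linarith) (abs_nonneg _))
      _ = _ := by ring
  have hDle := le_of_mul_le_mul_left hDκ hκ
  rw [mul_integral_mul_cosh_eq hderiv hcont hmean]
  calc ε * |h 0| * (sinh κ - κ) ≤ |h 0 * (sinh κ - κ)| - |D| := by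
        rw [abs_mul, abs_of_nonneg (sub_nonneg.2 (self_le_sinh_iff.2 hκ.le))]; linarith
    _ ≤ _ := abs_sub_abs_le_abs_sub _ _

/-- Sufficient condition for the quantitative strategic condition: if `h` is continuously
differentiable on `[-1,0]`, has zero mean, and its derivative satisfies
`sup |h'| < ((1-ε) tanh 1 / (1 - 2/e)) |h(0)|` for some `ε ∈ (0,1)`, then
`inf_{k≥1} (k/cosh k) |∫_{-1}^0 h(y) cosh(k(y+1)) dy| > 0`.
(The infimum over `k ≥ 1` is encoded as an infimum over `k : ℕ` of the expression at
`k + 1`.) -/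
theorem strategic_profile_sufficient_condition
    (ε : ℝ) (hε : ε ∈ Set.Ioo (0:ℝ) 1)
    (h h' : ℝ → ℝ)
    (hderiv : ∀ y ∈ Set.Icc (-1:ℝ) 0, HasDerivWithinAt h (h' y) (Set.Icc (-1:ℝ) 0) y)
    (hcont : ContinuousOn h' (Set.Icc (-1:ℝ) 0))
    (hmean : ∫ y in (-1:ℝ)..0, h y = 0)
    (hsmall : (⨆ y ∈ Set.Icc (-1:ℝ) 0, |h' y|)
        < ((1 - ε) * Real.tanh 1 / (1 - 2 / Real.exp 1)) * |h 0|) :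
    0 < ⨅ k : ℕ, (((k : ℝ) + 1) / Real.cosh ((k : ℝ) + 1)) *
        |∫ y in (-1:ℝ)..0, h y * Real.cosh (((k : ℝ) + 1) * (y + 1))| := by
  obtain ⟨hε0, hε1⟩ := hε
  have hM : ∀ y ∈ Set.Icc (-1:ℝ) 0, |h' y| ≤ ⨆ y ∈ Set.Icc (-1:ℝ) 0, |h' y| :=
    fun y hy => isCompact_Icc.le_biSup_of_continuousOn hcont.abs hy
  have hh0 : 0 < |h 0| := by
    by_contra! h0
    have hM0 := hM 0 (by norm_num)
    rw [abs_nonpos_iff.1 h0, abs_zero, mul_zero] at hsmall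
    linarith [abs_nonneg (h' 0)]
  rw [mul_div_assoc] at hsmall
  have hδ : 0 < ε * |h 0| * ((sinh 1 - 1) / cosh 1) :=
    mul_pos (mul_pos hε0 hh0) (div_pos (by linarith [one_lt_sinh_one]) (cosh_pos 1))
  refine hδ.trans_le (le_ciInf fun k => ?_)
  have hκ : (1:ℝ) ≤ k + 1 := by linarith [k.cast_nonneg (α := ℝ)]
  have hI := mul_sinh_sub_le_abs_mul_integral hderiv hcont hmean hM hsmall.le
    tanh_one_div_one_sub_two_div_exp_le_four hε1.le (κ := k + 1) (by linarith)
  rw [abs_mul, abs_of_pos (by linarith : (0:ℝ) < k + 1)] at hI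
  rw [div_mul_eq_mul_div, mul_div_assoc', le_div_iff₀ (cosh_pos _), ← mul_div_right_comm,
    div_le_iff₀ (cosh_pos 1)]
  calc ε * |h 0| * (sinh 1 - 1) * cosh ((k:ℝ) + 1)
      ≤ ε * |h 0| * ((sinh ((k:ℝ) + 1) - ((k:ℝ) + 1)) * cosh 1) := by
        rw [mul_assoc _ (sinh 1 - 1)]
        exact mul_le_mul_of_nonneg_left (sinh_one_sub_one_mul_cosh_le hκ) (by positivity)
    _ ≤ _ := by rw [← mul_assoc]; exact mul_le_mul_of_nonneg_right hI (cosh_pos 1).le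
end
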